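/- Let m be a positive integer, τ ∈ ℍ, and z ∈ ℂ with 0 < Im z < Im τ; set α := Im(z)/Im(τ) and y := e^{2πiz}. Then Σ_{k∈ℤ} y^{2km+1} q^{mk² + k} / (1 − y q^k) = (1/2) Σ_{(k,l)∈ℤ²} ( sgn(k+α) + sgn(l) ) y^{2mk+l} q^{mk² + kl} − (1/2) Σ_{k∈ℤ} y^{2mk} q^{mk²}, where all series converge absolutely. -/

import Mathlib

open Complex Real

/-- `qp τ c` is `q^c = e^{2πicτ}`. -/
noncomputable def qp (τ : ℂ) (c : ℝ) : ℂ := Complex.exp (2 * Real.pi * Complex.I * c * τ)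

/-!
Write `A_k = y^{2mk} q^{mk²}` and `w_k = y q^k`, so that the `(k, l)` term of the double series is
`(sgn(k + α) + sgn l) A_k w_k^l` and `|w_k| = e^{-2π Im τ (k + α)}`. In row `k` the sign factor
kills exactly the half-line on which the geometric series in `w_k` diverges (`l < 0` when
`k + α > 0`, `l > 0` when `k + α < 0`), and in both cases the row sums to
`A_k (1 + w_k)/(1 - w_k) = 2 A_k w_k/(1 - w_k) + A_k`. Since `0 < α < 1`, `|k + α|` stays away
from `0`, so the rows are dominated by `2 |A_k| ρ^{|l|}` for one `ρ < 1`; the `A_k` are terms of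
the Jacobi theta series in `2mτ`, hence absolutely summable, and summing the rows gives the
identity.
-/

lemma hasSum_one_add_sign_mul_zpow {w : ℂ} (hw : ‖w‖ < 1) :
    HasSum (fun l : ℤ => ((1 + Real.sign (l : ℝ) : ℝ) : ℂ) * w ^ l) (2 * (w / (1 - w)) + 1) := by
  have hnat : HasSum (fun n : ℕ => ((1 + Real.sign ((n : ℤ) : ℝ) : ℝ) : ℂ) * w ^ (n : ℤ))
      (2 * (1 - w)⁻¹ - 1) := by
    refine (((hasSum_geometric_of_norm_lt_one hw).mul_left 2).sub
      (hasSum_ite_eq 0 (1 : ℂ))).congr_fun fun n => ?_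
    rcases Nat.eq_zero_or_pos n with rfl | hn
    · norm_num
    · rw [Real.sign_of_pos (by exact_mod_cast hn), if_neg hn.ne', zpow_natCast]
      push_cast
      ring
  have hneg : HasSum (fun n : ℕ =>
      ((1 + Real.sign ((-((n : ℤ) + 1) : ℤ) : ℝ) : ℝ) : ℂ) * w ^ (-((n : ℤ) + 1))) 0 := by
    refine hasSum_zero.congr_fun fun n => ?_
    rw [Real.sign_of_neg (by push_cast; linarith [n.cast_nonneg (α := ℝ)])]
    simp
  have h1w : 1 - w ≠ 0 := by
    rw [sub_ne_zero]; rintro rfl; simp at hw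
  have hval : 2 * (w / (1 - w)) + 1 = 2 * (1 - w)⁻¹ - 1 + 0 := by
    field_simp
    ring
  rw [hval]
  exact hnat.of_nat_of_neg_add_one hneg

lemma norm_one_add_sign_mul_zpow_le {w : ℂ} {ρ : ℝ} (hw : ‖w‖ ≤ ρ) (l : ℤ) :
    ‖((1 + Real.sign (l : ℝ) : ℝ) : ℂ) * w ^ l‖ ≤ 2 * ρ ^ l.natAbs := by
  have hρ : 0 ≤ ρ := (norm_nonneg w).trans hw
  rcases lt_trichotomy l 0 with hl | rfl | hl
  · rw [Real.sign_of_neg (by exact_mod_cast hl)]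
    simp only [add_neg_cancel, Complex.ofReal_zero, zero_mul, norm_zero]
    positivity
  · norm_num
  · lift l to ℕ using hl.le
    rw [Real.sign_of_pos (by exact_mod_cast hl), norm_mul, zpow_natCast, norm_pow,
      Int.natAbs_natCast, Complex.norm_real, one_add_one_eq_two, Real.norm_two]
    gcongr

/- The reflection `(t, w, l) ↦ (-t, w⁻¹, -l)` preserves `‖w‖ = exp (-(c * t))`; it reduces the
case `t < 0` below to `t > 0`. -/
lemma sign_neg_add_sign_neg_mul_inv_zpow_neg (t : ℝ) (w : ℂ) (l : ℤ) :
    ((Real.sign (-t) + Real.sign ((-l : ℤ) : ℝ) : ℝ) : ℂ) * w⁻¹ ^ (-l) =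
      -(((Real.sign t + Real.sign (l : ℝ) : ℝ) : ℂ) * w ^ l) := by
  rw [Int.cast_neg, Real.sign_neg, Real.sign_neg, inv_zpow', neg_neg]
  push_cast
  ring

section SignedGeometric

variable {c t : ℝ} {w : ℂ}

lemma hasSum_sign_add_sign_mul_zpow (hc : 0 < c) (ht : t ≠ 0)
    (hw : ‖w‖ = Real.exp (-(c * t))) :
    HasSum (fun l : ℤ => ((Real.sign t + Real.sign (l : ℝ) : ℝ) : ℂ) * w ^ l)
      (2 * (w / (1 - w)) + 1) := by
  wlog htpos : 0 < t generalizing t w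
  · have htneg : t < 0 := lt_of_le_of_ne (not_lt.1 htpos) ht
    have hw_gt : 1 < ‖w‖ := by rw [hw, Real.one_lt_exp_iff]; nlinarith
    have hw0 : w ≠ 0 := norm_pos_iff.1 (one_pos.trans hw_gt)
    have h1w : (1 : ℂ) - w ≠ 0 := by
      rw [sub_ne_zero]; rintro rfl; simp at hw_gt
    have hinv := this (t := -t) (w := w⁻¹) (neg_ne_zero.2 ht)
      (by rw [norm_inv, hw, ← Real.exp_neg, neg_mul_eq_mul_neg]) (neg_pos.2 htneg)
    have hval : 2 * (w / (1 - w)) + 1 = -(2 * (w⁻¹ / (1 - w⁻¹)) + 1) := by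
      rw [show (1 : ℂ) - w⁻¹ = -((1 - w) / w) by field_simp; ring]
      field_simp
      ring
    rw [hval]
    refine ((Equiv.neg ℤ).hasSum_iff.2 hinv).neg.congr_fun fun l => ?_
    simp only [Function.comp_apply, Equiv.neg_apply, sign_neg_add_sign_neg_mul_inv_zpow_neg,
      neg_neg]
  rw [Real.sign_of_pos htpos]
  exact hasSum_one_add_sign_mul_zpow (by rw [hw, Real.exp_lt_one_iff]; nlinarith)

lemma mul_div_one_sub_eq_tsum_sign_add_sign (hc : 0 < c) (ht : t ≠ 0)
    (hw : ‖w‖ = Real.exp (-(c * t))) (A : ℂ) :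
    A * (w / (1 - w)) =
      (1 / 2) * ∑' l : ℤ, ((Real.sign t + Real.sign (l : ℝ) : ℝ) : ℂ) * (A * w ^ l) -
        (1 / 2) * A := by
  have hrow := (hasSum_sign_add_sign_mul_zpow hc ht hw).mul_left A
  rw [(hrow.congr_fun fun l => mul_left_comm _ _ _).tsum_eq]
  ring

lemma norm_sign_add_sign_mul_zpow_le {δ : ℝ} (hc : 0 < c) (hδ : 0 < δ) (ht : δ ≤ |t|)
    (hw : ‖w‖ = Real.exp (-(c * t))) (l : ℤ) :
    ‖((Real.sign t + Real.sign (l : ℝ) : ℝ) : ℂ) * w ^ l‖ ≤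
      2 * Real.exp (-(c * δ)) ^ l.natAbs := by
  wlog htpos : 0 < t generalizing t w l
  · have htneg : t < 0 :=
      lt_of_le_of_ne (not_lt.1 htpos) (abs_pos.1 (hδ.trans_le ht))
    have := this (t := -t) (w := w⁻¹) (by rwa [abs_neg])
      (by rw [norm_inv, hw, ← Real.exp_neg, neg_mul_eq_mul_neg]) (-l) (neg_pos.2 htneg)
    rwa [sign_neg_add_sign_neg_mul_inv_zpow_neg, norm_neg, Int.natAbs_neg] at this
  rw [Real.sign_of_pos htpos]
  refine norm_one_add_sign_mul_zpow_le ?_ l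
  rw [abs_of_pos htpos] at ht
  rw [hw, Real.exp_le_exp]
  nlinarith

end SignedGeometric

lemma summable_pow_natAbs {ρ : ℝ} (h0 : 0 ≤ ρ) (h1 : ρ < 1) :
    Summable fun l : ℤ => ρ ^ l.natAbs := by
  apply Summable.of_nat_of_neg <;> simpa using summable_geometric_of_lt_one h0 h1

section SignedDoubleSeries

variable {ι : Type*} {A w : ι → ℂ} {t : ι → ℝ} {c δ : ℝ}

lemma summable_norm_sign_add_sign_mul (hc : 0 < c) (hδ : 0 < δ) (ht : ∀ k, δ ≤ |t k|)
    (hw : ∀ k, ‖w k‖ = Real.exp (-(c * t k))) (hA : Summable fun k => ‖A k‖) :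
    Summable fun n : ι × ℤ =>
      ‖((Real.sign (t n.1) + Real.sign (n.2 : ℝ) : ℝ) : ℂ) * (A n.1 * w n.1 ^ n.2)‖ := by
  have hρ : Real.exp (-(c * δ)) < 1 := Real.exp_lt_one_iff.2 (by nlinarith)
  refine Summable.of_nonneg_of_le (fun _ => norm_nonneg _) (fun n => ?_)
    (hA.mul_of_nonneg ((summable_pow_natAbs (Real.exp_pos _).le hρ).mul_left 2)
      (fun _ => norm_nonneg _) (fun _ => by positivity))
  rw [mul_left_comm, norm_mul]
  exact mul_le_mul_of_nonneg_left
    (norm_sign_add_sign_mul_zpow_le hc hδ (ht n.1) (hw n.1) n.2) (norm_nonneg _)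

lemma summable_norm_mul_div_one_sub (hc : 0 < c) (hδ : 0 < δ) (ht : ∀ k, δ ≤ |t k|)
    (hw : ∀ k, ‖w k‖ = Real.exp (-(c * t k))) (hA : Summable fun k => ‖A k‖) :
    Summable fun k => ‖A k * (w k / (1 - w k))‖ := by
  have hrow (k : ι) := mul_div_one_sub_eq_tsum_sign_add_sign hc
    (abs_pos.1 (hδ.trans_le (ht k))) (hw k) (A k)
  have hF := (summable_norm_sign_add_sign_mul hc hδ ht hw hA).of_norm
  simp only [hrow]
  exact summable_norm_iff.2 ((hF.prod.mul_left _).sub (hA.of_norm.mul_left _))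

theorem tsum_mul_div_one_sub_eq (hc : 0 < c) (hδ : 0 < δ) (ht : ∀ k, δ ≤ |t k|)
    (hw : ∀ k, ‖w k‖ = Real.exp (-(c * t k))) (hA : Summable fun k => ‖A k‖) :
    ∑' k, A k * (w k / (1 - w k)) =
      (1 / 2) * ∑' n : ι × ℤ,
        ((Real.sign (t n.1) + Real.sign (n.2 : ℝ) : ℝ) : ℂ) * (A n.1 * w n.1 ^ n.2) -
      (1 / 2) * ∑' k, A k := by
  have hrow (k : ι) := mul_div_one_sub_eq_tsum_sign_add_sign hc
    (abs_pos.1 (hδ.trans_le (ht k))) (hw k) (A k)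
  have hF := (summable_norm_sign_add_sign_mul hc hδ ht hw hA).of_norm
  simp only [hrow]
  rw [(hF.prod.mul_left _).tsum_sub (hA.of_norm.mul_left _), tsum_mul_left, tsum_mul_left,
    hF.tsum_prod]

end SignedDoubleSeries

lemma min_le_abs_intCast_add (α : ℝ) (k : ℤ) : min α (1 - α) ≤ |k + α| := by
  rcases le_or_gt 0 k with hk | hk
  · have : (0 : ℝ) ≤ k := by exact_mod_cast hk
    linarith [min_le_left α (1 - α), le_abs_self ((k : ℝ) + α)]
  · have : (k : ℝ) ≤ -1 := by exact_mod_cast Int.le_sub_one_of_lt hk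
    linarith [min_le_right α (1 - α), neg_le_abs ((k : ℝ) + α)]

lemma qp_add (τ : ℂ) (a b : ℝ) : qp τ (a + b) = qp τ a * qp τ b := by
  rw [qp, qp, qp, ← Complex.exp_add]; congr 1; push_cast; ring

lemma qp_mul_intCast (τ : ℂ) (a : ℝ) (n : ℤ) : qp τ (a * n) = qp τ a ^ n := by
  rw [qp, qp, ← Complex.exp_int_mul]; congr 1; push_cast; ring

lemma norm_qp (τ : ℂ) (a : ℝ) : ‖qp τ a‖ = Real.exp (-(2 * π * a * τ.im)) := by
  rw [qp, Complex.norm_exp]; congr 1; simp [Complex.mul_re, Complex.mul_im]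

lemma exp_zpow_mul_qp_eq_jacobiTheta₂_term (m : ℕ) (τ z : ℂ) (k : ℤ) :
    Complex.exp (2 * π * I * z) ^ (2 * (m : ℤ) * k) * qp τ ((m : ℝ) * (k : ℝ) ^ 2) =
      jacobiTheta₂_term k (2 * m * z) (2 * m * τ) := by
  rw [← Complex.exp_int_mul, qp, jacobiTheta₂_term, ← Complex.exp_add]; congr 1; push_cast; ring

lemma zpow_mul_qp_div_one_sub_eq_mul {y : ℂ} (hy : y ≠ 0) (τ : ℂ) (m : ℕ) (k : ℤ) :
    y ^ (2 * k * (m : ℤ) + 1) * qp τ ((m : ℝ) * (k : ℝ) ^ 2 + (k : ℝ)) / (1 - y * qp τ (k : ℝ)) =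
      y ^ (2 * (m : ℤ) * k) * qp τ ((m : ℝ) * (k : ℝ) ^ 2) *
        (y * qp τ (k : ℝ) / (1 - y * qp τ (k : ℝ))) := by
  rw [show 2 * k * (m : ℤ) + 1 = 2 * (m : ℤ) * k + 1 by ring, zpow_add_one₀ hy, qp_add]
  ring

lemma zpow_add_mul_qp_add_eq_mul_zpow {y : ℂ} (hy : y ≠ 0) (τ : ℂ) (m : ℕ) (k l : ℤ) :
    y ^ (2 * (m : ℤ) * k + l) * qp τ ((m : ℝ) * (k : ℝ) ^ 2 + (k : ℝ) * (l : ℝ)) =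
      y ^ (2 * (m : ℤ) * k) * qp τ ((m : ℝ) * (k : ℝ) ^ 2) * (y * qp τ (k : ℝ)) ^ l := by
  rw [zpow_add₀ hy, qp_add, qp_mul_intCast, mul_zpow]
  ring

lemma summable_norm_exp_zpow_mul_qp {m : ℕ} (hm : 0 < m) {τ : ℂ} (hτ : 0 < τ.im) (z : ℂ) :
    Summable fun k : ℤ =>
      ‖Complex.exp (2 * π * I * z) ^ (2 * (m : ℤ) * k) * qp τ ((m : ℝ) * (k : ℝ) ^ 2)‖ := by
  simp only [exp_zpow_mul_qp_eq_jacobiTheta₂_term]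
  exact summable_norm_iff.2 ((summable_jacobiTheta₂_term_iff _ _).2 (by simp; positivity))

lemma norm_exp_mul_qp {τ : ℂ} (hτ : τ.im ≠ 0) (z : ℂ) (a : ℝ) :
    ‖Complex.exp (2 * π * I * z) * qp τ a‖ = Real.exp (-(2 * π * τ.im * (a + z.im / τ.im))) := by
  rw [norm_mul, norm_qp, Complex.norm_exp, ← Real.exp_add]
  congr 1
  field_simp
  simp only [mul_re, re_ofNat, ofReal_re, im_ofNat, ofReal_im, mul_zero, sub_zero, I_re, mul_im,
    zero_mul, add_zero, I_im, mul_one, sub_self, zero_sub]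
  ring

/-- For `0 < Im z < Im τ` and `α = Im z / Im τ`,
`Σ_{k∈ℤ} y^{2km+1} q^{mk²+k}/(1 - y q^k)
  = (1/2) Σ_{(k,l)∈ℤ²} (sgn(k+α)+sgn(l)) y^{2mk+l} q^{mk²+kl} - (1/2) Σ_{k∈ℤ} y^{2mk} q^{mk²}`. -/
theorem f2_signed_expansion (m : ℕ) (hm : 0 < m) (τ z : ℂ) (hτ : 0 < τ.im)
    (hz0 : 0 < z.im) (hz1 : z.im < τ.im)
    (y : ℂ) (hy : y = Complex.exp (2 * Real.pi * Complex.I * z)) :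
    Summable (fun k : ℤ =>
      ‖y ^ (2 * k * (m : ℤ) + 1) * qp τ ((m : ℝ) * (k : ℝ) ^ 2 + (k : ℝ)) / (1 - y * qp τ (k : ℝ))‖) ∧
    Summable (fun n : ℤ × ℤ =>
      ‖((Real.sign ((n.1 : ℝ) + z.im / τ.im) + Real.sign (n.2 : ℝ) : ℝ) : ℂ) *
        (y ^ (2 * (m : ℤ) * n.1 + n.2) *
          qp τ ((m : ℝ) * (n.1 : ℝ) ^ 2 + (n.1 : ℝ) * (n.2 : ℝ)))‖) ∧
    Summable (fun k : ℤ => ‖y ^ (2 * (m : ℤ) * k) * qp τ ((m : ℝ) * (k : ℝ) ^ 2)‖) ∧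
    (∑' k : ℤ, y ^ (2 * k * (m : ℤ) + 1) * qp τ ((m : ℝ) * (k : ℝ) ^ 2 + (k : ℝ)) / (1 - y * qp τ (k : ℝ))) =
      (1 / 2) * (∑' n : ℤ × ℤ,
        ((Real.sign ((n.1 : ℝ) + z.im / τ.im) + Real.sign (n.2 : ℝ) : ℝ) : ℂ) *
          (y ^ (2 * (m : ℤ) * n.1 + n.2) *
            qp τ ((m : ℝ) * (n.1 : ℝ) ^ 2 + (n.1 : ℝ) * (n.2 : ℝ)))) -
      (1 / 2) * (∑' k : ℤ, y ^ (2 * (m : ℤ) * k) * qp τ ((m : ℝ) * (k : ℝ) ^ 2)) := by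
  subst hy
  have hy0 := Complex.exp_ne_zero (2 * π * I * z)
  have hc : 0 < 2 * π * τ.im := by positivity
  have hδ : 0 < min (z.im / τ.im) (1 - z.im / τ.im) :=
    lt_min (div_pos hz0 hτ) (sub_pos.2 ((div_lt_one hτ).2 hz1))
  have ht := min_le_abs_intCast_add (z.im / τ.im)
  have hw (k : ℤ) := norm_exp_mul_qp hτ.ne' z k
  have hA := summable_norm_exp_zpow_mul_qp hm hτ z
  simp only [zpow_mul_qp_div_one_sub_eq_mul hy0, zpow_add_mul_qp_add_eq_mul_zpow hy0]
  -- `(_ :)` elaborates each lemma before unifying with the goal, in which `A n.1` is no pattern.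
  exact ⟨(summable_norm_mul_div_one_sub hc hδ ht hw hA :),
    (summable_norm_sign_add_sign_mul hc hδ ht hw hA :), hA,
    (tsum_mul_div_one_sub_eq hc hδ ht hw hA :)⟩
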